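/- (False-negative rate bound) With the same setup, P(C* < Ĉ^{(M−n)} ∧ C* ≥ c_a) ≤ ∑_{i=n+1}^{M} C(M,i) p^i (1−p)^{M−i}. -/

import Mathlib

/-!
A false negative forces `c_a ≤ C* < Ĉ^{(M−n)}`, so at least `n + 1` of the `Ĉ_j` lie in
`[c_a, ∞)`. These are `M` independent events of probability `p`: the probability that exactly
the events indexed by `T` occur is `p ^ #T * (1 - p) ^ (M - #T)`, so the number of events that
occur is binomially distributed, and the bound is its upper tail.
-/

open MeasureTheory ProbabilityTheory Finset

/-- The `k`-th smallest value (0-indexed) among `f 0, …, f (M-1)`. -/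
noncomputable def orderStat {M : ℕ} (f : Fin M → ℝ) (k : Fin M) : ℝ :=
  f (Tuple.sort f k)

lemma sub_le_card_filter_of_le_orderStat {M : ℕ} (f : Fin M → ℝ) (k : Fin M) {c : ℝ}
    (hc : c ≤ orderStat f k) : M - k ≤ #{j | c ≤ f j} := by
  rw [← Fin.card_Ici]
  refine card_le_card_of_injOn (Tuple.sort f) (fun i hi => ?_) (Tuple.sort f).injective.injOn
  simpa using hc.trans (Tuple.monotone_sort f (mem_Ici.mp hi))

section Occurring

variable {Ω ι : Type*} [Fintype ι] {A : ι → Set Ω}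

open Classical in
noncomputable def occurring (A : ι → Set Ω) (ω : Ω) : Finset ι := {i | ω ∈ A i}

lemma occurring_preimage_singleton [DecidableEq ι] (A : ι → Set Ω) (T : Finset ι) :
    occurring A ⁻¹' {T} = ⋂ i, if i ∈ T then A i else (A i)ᶜ := by
  ext ω
  simp only [Set.mem_preimage, Set.mem_singleton_iff, Set.mem_iInter, Finset.ext_iff, occurring,
    mem_filter, mem_univ, true_and]
  refine forall_congr' fun i => ?_
  split_ifs with hi <;> simp [hi]

lemma measurableSet_occurring_preimage [MeasurableSpace Ω] (hA : ∀ i, MeasurableSet (A i))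
    (S : Set (Finset ι)) : MeasurableSet (occurring A ⁻¹' S) := by
  classical
  rw [← Set.biUnion_preimage_singleton]
  refine .biUnion S.to_countable fun T _ => ?_
  rw [occurring_preimage_singleton]
  exact .iInter fun i => by split_ifs; exacts [hA i, (hA i).compl]

end Occurring

namespace ProbabilityTheory

lemma iIndepFun.iIndepSet_preimage {Ω ι β : Type*} [MeasurableSpace Ω] [MeasurableSpace β]
    {μ : Measure Ω} {X : ι → Ω → β} (h : iIndepFun X μ) (hX : ∀ i, Measurable (X i))
    {S : Set β} (hS : MeasurableSet S) : iIndepSet (fun i => X i ⁻¹' S) μ :=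
  (iIndepSet_iff_meas_biInter fun i => hX i hS).2 fun _ =>
    h.meas_biInter fun _ _ => ⟨S, hS, rfl⟩

namespace iIndepSet

variable {Ω ι : Type*} [Fintype ι] [MeasurableSpace Ω] {μ : Measure Ω} {A : ι → Set Ω}
  {q : ENNReal}

lemma measure_occurring_preimage_singleton [DecidableEq ι] (h : iIndepSet A μ)
    (hA : ∀ i, MeasurableSet (A i)) (hq : ∀ i, μ (A i) = q) (T : Finset ι) :
    μ (occurring A ⁻¹' {T}) = q ^ #T * (1 - q) ^ (Fintype.card ι - #T) := by
  have := h.isProbabilityMeasure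
  have hgen (i : ι) : MeasurableSet[MeasurableSpace.generateFrom {A i}] (A i) :=
    MeasurableSpace.measurableSet_generateFrom rfl
  rw [occurring_preimage_singleton, ((iIndepSet_iff_iIndep A μ).1 h).meas_iInter fun i => by
    split_ifs; exacts [hgen i, (hgen i).compl]]
  have hin : ∀ i ∈ T, μ (if i ∈ T then A i else (A i)ᶜ) = q := fun i hi => by
    rw [if_pos hi, hq]
  have hout : ∀ i ∈ Tᶜ, μ (if i ∈ T then A i else (A i)ᶜ) = 1 - q := fun i hi => by
    rw [if_neg (mem_compl.1 hi), prob_compl_eq_one_sub (hA i), hq]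
  rw [← prod_mul_prod_compl T, prod_congr rfl hin, prod_congr rfl hout, prod_const, prod_const,
    card_compl]

lemma measure_card_occurring_eq (h : iIndepSet A μ) (hA : ∀ i, MeasurableSet (A i))
    (hq : ∀ i, μ (A i) = q) (k : ℕ) :
    μ (occurring A ⁻¹' {T | #T = k}) =
      (Fintype.card ι).choose k * (q ^ k * (1 - q) ^ (Fintype.card ι - k)) := by
  classical
  have hk : {T : Finset ι | #T = k} = ↑(powersetCard k (univ : Finset ι)) := by
    ext T; simp
  rw [hk, ← sum_measure_preimage_singleton _ fun T _ =>
      measurableSet_occurring_preimage hA {T}]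
  rw [sum_congr rfl fun T hT => by
      rw [h.measure_occurring_preimage_singleton hA hq, (mem_powersetCard.1 hT).2],
    sum_const, card_powersetCard, card_univ, nsmul_eq_mul]

lemma measure_le_card_occurring (h : iIndepSet A μ) (hA : ∀ i, MeasurableSet (A i))
    (hq : ∀ i, μ (A i) = q) (m : ℕ) :
    μ {ω | m ≤ #(occurring A ω)} = ∑ k ∈ Icc m (Fintype.card ι),
      (Fintype.card ι).choose k * (q ^ k * (1 - q) ^ (Fintype.card ι - k)) := by
  have hfib : {ω | m ≤ #(occurring A ω)} =
      (fun ω => #(occurring A ω)) ⁻¹' ↑(Icc m (Fintype.card ι)) := by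
    ext ω; simpa using fun _ => card_le_univ _
  rw [hfib, ← sum_measure_preimage_singleton _ fun k _ =>
      measurableSet_occurring_preimage hA {T | #T = k}]
  exact sum_congr rfl fun k _ => h.measure_card_occurring_eq hA hq k

end iIndepSet

end ProbabilityTheory

/-- False-negative rate bound: if the predicted costs `Ĉ₁,…,Ĉ_M` are i.i.d. with
`P(Ĉⱼ ≥ c_a) = p` and independent of the observed cost `C*`, then
`P(C* < Ĉ^{(M−n)} ∧ C* ≥ c_a) ≤ ∑_{i=n+1}^{M} C(M,i) pⁱ (1-p)^{M-i}`. -/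
theorem stmt3 {Ω : Type*} [MeasurableSpace Ω] (P : Measure Ω) [IsProbabilityMeasure P]
    (M n : ℕ) (hM : 1 ≤ M) (hn : n ≤ M - 1)
    (p : ℝ) (hp : p ∈ Set.Icc (0 : ℝ) 1) (c_a : ℝ)
    (Cstar : Ω → ℝ) (Chat : Fin M → Ω → ℝ)
    (hmeas : ∀ j, Measurable (Chat j))
    (hind : iIndepFun Chat P)
    (hquant : ∀ j, P {ω | c_a ≤ Chat j ω} = ENNReal.ofReal p) :
    P {ω | Cstar ω < orderStat (fun j => Chat j ω) ⟨M - n - 1, by omega⟩ ∧ c_a ≤ Cstar ω}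
      ≤ ENNReal.ofReal (∑ i ∈ Finset.Icc (n + 1) M,
          (M.choose i : ℝ) * p ^ i * (1 - p) ^ (M - i)) := by
  set A : Fin M → Set Ω := fun j => Chat j ⁻¹' Set.Ici c_a
  have hevent : {ω | Cstar ω < orderStat (fun j => Chat j ω) ⟨M - n - 1, by omega⟩ ∧
      c_a ≤ Cstar ω} ⊆ {ω | n + 1 ≤ #(occurring A ω)} := fun ω ⟨hlt, hle⟩ => by
    have hcount : M - (M - n - 1) ≤ #{j | c_a ≤ Chat j ω} :=
      sub_le_card_filter_of_le_orderStat _ _ (hle.trans hlt.le)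
    have hfilter : occurring A ω = ({j | c_a ≤ Chat j ω} : Finset (Fin M)) := by
      ext j; simp [occurring, A]
    change n + 1 ≤ #(occurring A ω)
    rw [hfilter]
    omega
  obtain ⟨hp0, hp1⟩ := hp
  have hp1' : 0 ≤ 1 - p := sub_nonneg.2 hp1
  have hcompl : 1 - ENNReal.ofReal p = ENNReal.ofReal (1 - p) := by
    rw [← ENNReal.ofReal_one, ENNReal.ofReal_sub _ hp0]
  calc _ ≤ P {ω | n + 1 ≤ #(occurring A ω)} := measure_mono hevent
    _ = _ := (hind.iIndepSet_preimage hmeas measurableSet_Ici).measure_le_card_occurring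
        (fun j => hmeas j measurableSet_Ici) hquant (n + 1)
    _ = _ := by
      rw [ENNReal.ofReal_sum_of_nonneg fun i _ => by positivity, Fintype.card_fin]
      refine sum_congr rfl fun i _ => ?_
      rw [ENNReal.ofReal_mul (by positivity), ENNReal.ofReal_mul (by positivity),
        ENNReal.ofReal_pow hp0, ENNReal.ofReal_pow hp1', ENNReal.ofReal_natCast, hcompl, mul_assoc]
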